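/- Let M be a finite nonempty type and let E be the complementation relation on Set M: E(X,Y) := (Cmp X ∨ Cmp Y) → (X = Y ∨ (Cardinal.mk X = Cardinal.mk Y ∧ X ∩ Y = ∅ ∧ X ∪ Y = Set.univ)), where Cmp(X) holds iff there exists Y with Cardinal.mk X = Cardinal.mk Y, X ∩ Y = ∅ and X ∪ Y = Set.univ. Then there exists a function ∂ : Set M → M realizing A[E] if and only if Nat.card M is odd, or Nat.card M = 2, or Nat.card M = 4. -/

import Mathlib

/-!
Only the sets of size `|M| / 2` are complements, and `Ecmp X Y` says: if one of `X`, `Y` is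
a complement, then `Y = X` or `Y = Xᶜ`. If `|M|` is odd, `Ecmp` is total and a constant map
realizes it. If `|M| = 2m`, a realization takes at most two equal values on the `(2m choose m)`
sets of size `m`, so `(2m choose m) ≤ 4m`, which fails for `m ≥ 3`. For `|M| = 4` the three
complementary pairs of 2-element sets and the class of all other sets fill exactly the four
values; the realizations for `|M| = 2` and `|M| = 4` are checked by computation.
-/

/-- `X` is a complement: there is a set equinumerous with `X`, disjoint from `X`, whose
union with `X` is the universe. -/
def Cmp {M : Type*} (X : Set M) : Prop :=
  ∃ Y : Set M, Cardinal.mk X = Cardinal.mk Y ∧ X ∩ Y = ∅ ∧ X ∪ Y = Set.univ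

/-- The complementation relation. -/
def Ecmp {M : Type*} (X Y : Set M) : Prop :=
  (Cmp X ∨ Cmp Y) →
    (X = Y ∨ (Cardinal.mk X = Cardinal.mk Y ∧ X ∩ Y = ∅ ∧ X ∪ Y = Set.univ))

open Finset

def Realizes {α β : Type*} (d : α → β) (r : α → α → Prop) : Prop :=
  ∀ x y, d x = d y ↔ r x y

theorem eq_compl_of_inter_eq_empty_and_union_eq_univ {α : Type*} {X Y : Set α}
    (h : X ∩ Y = ∅ ∧ X ∪ Y = Set.univ) : Y = Xᶜ := by
  rw [eq_compl_iff_isCompl, isCompl_comm, isCompl_iff, Set.disjoint_iff_inter_eq_empty,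
    codisjoint_iff]
  exact h

section Complementation

variable {M : Type*} [Finite M]

theorem cardinal_mk_eq_iff_ncard_eq (X Y : Set M) :
    Cardinal.mk X = Cardinal.mk Y ↔ X.ncard = Y.ncard := by
  rw [Cardinal.eq, ← Finite.card_eq, Nat.card_coe_set_eq, Nat.card_coe_set_eq]

theorem cmp_iff_two_mul_ncard (X : Set M) : Cmp X ↔ 2 * X.ncard = Nat.card M := by
  have hsum := Set.ncard_add_ncard_compl X
  constructor
  · rintro ⟨Y, hcard, hinter, hunion⟩
    obtain rfl := eq_compl_of_inter_eq_empty_and_union_eq_univ ⟨hinter, hunion⟩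
    rw [cardinal_mk_eq_iff_ncard_eq] at hcard
    omega
  · intro h
    exact ⟨Xᶜ, (cardinal_mk_eq_iff_ncard_eq _ _).2 (by omega), by simp, by simp⟩

theorem ecmp_iff (X Y : Set M) :
    Ecmp X Y ↔ (Cmp X ∨ Cmp Y → X = Y ∨ Y = Xᶜ) := by
  have hsum := Set.ncard_add_ncard_compl X
  refine forall_congr' fun hcmp => or_congr_right ?_
  rw [cmp_iff_two_mul_ncard, cmp_iff_two_mul_ncard] at hcmp
  constructor
  · exact fun ⟨_, hcompl⟩ => eq_compl_of_inter_eq_empty_and_union_eq_univ hcompl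
  · rintro rfl
    exact ⟨(cardinal_mk_eq_iff_ncard_eq _ _).2 (by omega), by simp, by simp⟩

theorem ecmp_of_odd (hodd : Odd (Nat.card M)) (X Y : Set M) : Ecmp X Y := by
  have not_cmp (Z : Set M) : ¬ Cmp Z := by
    rw [cmp_iff_two_mul_ncard]
    intro h
    exact Nat.not_even_iff_odd.2 hodd ⟨Z.ncard, by omega⟩
  rw [ecmp_iff]
  rintro (h | h) <;> exact absurd h (not_cmp _)

theorem choose_half_le_of_realizes {d : Set M → M} (hd : Realizes d Ecmp)
    (heven : Even (Nat.card M)) : (Nat.card M).choose (Nat.card M / 2) ≤ 2 * Nat.card M := by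
  classical
  have := Fintype.ofFinite M
  set m := Nat.card M / 2
  obtain ⟨k, hk⟩ := heven
  set s : Finset (Finset M) := powersetCard m univ
  have fibre_le_two : ∀ b ∈ s.image (fun A : Finset M => d A),
      #(s.filter fun A : Finset M => d A = b) ≤ 2 := by
    simp only [mem_image]
    rintro b ⟨A, -, rfl⟩
    have fibre_subset : s.filter (fun B : Finset M => d B = d A) ⊆ {A, Aᶜ} := by
      intro B hB
      obtain ⟨hBs, hBA⟩ := mem_filter.1 hB
      have hcmp : Cmp (B : Set M) := by
        rw [cmp_iff_two_mul_ncard, Set.ncard_coe_finset, mem_powersetCard_univ.1 hBs]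
        omega
      rcases (ecmp_iff _ _).1 ((hd _ _).1 hBA) (Or.inl hcmp) with h | h
      · simp [Finset.coe_inj.1 h]
      · rw [← Finset.coe_compl, Finset.coe_inj] at h
        simp [h]
    exact (card_le_card fibre_subset).trans (card_insert_le _ _)
  calc (Nat.card M).choose m
      = #s := by rw [card_powersetCard, card_univ, Nat.card_eq_fintype_card]
    _ ≤ 2 * #(s.image fun A : Finset M => d A) := card_le_mul_card_image s 2 fibre_le_two
    _ ≤ 2 * Nat.card M := by
      rw [Nat.card_eq_fintype_card]
      exact Nat.mul_le_mul_left 2 (card_le_univ _)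

theorem exists_realizes_of_fin {n : ℕ} (e : M ≃ Fin n)
    (h : ∃ δ : Finset (Fin n) → Fin n,
      Realizes δ fun A B => 2 * #A = n ∨ 2 * #B = n → A = B ∨ B = Aᶜ) :
    ∃ d : Set M → M, Realizes d Ecmp := by
  classical
  obtain ⟨δ, hδ⟩ := h
  have hn : Nat.card M = n := by rw [Nat.card_congr e, Nat.card_eq_fintype_card, Fintype.card_fin]
  let F : Set M → Finset (Fin n) := fun X => (e '' X).toFinset
  have card_F (X : Set M) : #(F X) = X.ncard := by
    rw [← Set.ncard_eq_toFinset_card', Set.ncard_image_of_injective _ e.injective]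
  have F_inj (X Y : Set M) : F X = F Y ↔ X = Y := by
    rw [Set.toFinset_inj, Set.image_eq_image e.injective]
  have F_compl (X Y : Set M) : F Y = (F X)ᶜ ↔ Y = Xᶜ := by
    rw [← Finset.coe_inj, Finset.coe_compl, Set.coe_toFinset, Set.coe_toFinset,
      ← Set.image_compl_eq e.bijective, Set.image_eq_image e.injective]
  refine ⟨fun X => e.symm (δ (F X)), fun X Y => ?_⟩
  rw [EquivLike.apply_eq_iff_eq, hδ, ecmp_iff, cmp_iff_two_mul_ncard, cmp_iff_two_mul_ncard, hn]
  simp only [card_F, F_inj, F_compl]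

end Complementation

theorem four_mul_lt_centralBinom (m : ℕ) (hm : 3 ≤ m) : 4 * m < m.centralBinom := by
  induction m, hm using Nat.le_induction with
  | base => decide
  | succ k hk ih =>
    have := Nat.succ_mul_centralBinom_succ k
    nlinarith

/-- The Complementation Principle has a standard model on a finite nonempty domain iff the
domain has odd cardinality, or cardinality 2 or 4. -/
theorem complementation_exists_realization_iff {M : Type*} [Finite M] [Nonempty M] :
    (∃ d : Set M → M, ∀ X Y : Set M, d X = d Y ↔ Ecmp X Y) ↔
      (Odd (Nat.card M) ∨ Nat.card M = 2 ∨ Nat.card M = 4) := by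
  constructor
  · rintro ⟨d, hd⟩
    rcases Nat.even_or_odd (Nat.card M) with heven | hodd
    · have hle := choose_half_le_of_realizes hd heven
      obtain ⟨m, hm⟩ := heven
      rw [hm, show (m + m) / 2 = m by omega, ← two_mul, ← Nat.centralBinom_eq_two_mul_choose]
        at hle
      have hpos : 0 < Nat.card M := Nat.card_pos
      by_contra! h
      have := four_mul_lt_centralBinom m (by omega)
      omega
    · exact Or.inl hodd
  · rintro (hodd | h2 | h4)
    · exact ⟨fun _ => Classical.arbitrary M, fun X Y => iff_of_true rfl (ecmp_of_odd hodd X Y)⟩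
    · exact exists_realizes_of_fin (Finite.equivFinOfCardEq h2)
        ⟨fun A => if #A = 1 then 1 else 0, by unfold Realizes; decide⟩
    · exact exists_realizes_of_fin (Finite.equivFinOfCardEq h4)
        ⟨fun A => if A = {0, 1} ∨ A = {2, 3} then 1
          else if A = {0, 2} ∨ A = {1, 3} then 2
          else if A = {0, 3} ∨ A = {1, 2} then 3
          else 0, by unfold Realizes; decide⟩
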